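/- arXiv:1608.05766 — 5 statements merged into one kernel-verified Lean document; each statement's English description precedes it below -/
import Mathlib

section
/- Suppose x^k ∈ ℝ^{n×p} satisfies the recursion x^{k+1} = Wx^k − α g^k where W is symmetric with W1 = 1, ‖W^j − (1/n)11^T‖ ≤ Cζ^j for all j with 0 ≤ ζ < 1, and ‖g^k‖ ≤ D for all k. Then with x̄^k = (1/n)11^T x^k, for every k and every row i, ‖x^k_{(i)} − x̄^k_{(i)}‖ ≤ Cζ^k‖x^0‖ + αD·C/(1−ζ); in particular in the limit the consensus error is bounded by αDC/(1−ζ). -/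
/-!
Unrolling the recursion gives `x^k = W^k x^0 - α ∑_{t<k} W^t g^{k-1-t}`. Since `W` is symmetric
with `W 1 = 1`, the averaging matrix `J = (1/n) 1 1ᵀ` satisfies `J W = J`, so `(I - J) W^t = W^t - J`
and the deviation `(I - J) x^k` equals `(W^k - J) x^0 - α ∑_{t<k} (W^t - J) g^{k-1-t}`. Bounding each
term by `C ζ^t` times the norm of its right factor and summing the geometric series gives the bound
for the whole deviation matrix, hence for each of its rows.
-/

/-- The Frobenius norm of a real matrix. -/
noncomputable def frob {m p : Type*} [Fintype m] [Fintype p] (A : Matrix m p ℝ) : ℝ :=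
  Real.sqrt (∑ i, ∑ j, (A i j) ^ 2)

open Finset Matrix
open scoped Matrix.Norms.Frobenius

theorem Matrix.of_const_mul_eq_of_vecMul_eq_one {l m R : Type*} [Fintype m] [Semiring R]
    (c : R) {W : Matrix m m R} (hW : 1 ᵥ* W = 1) :
    (of fun (_ : l) (_ : m) => c) * W = of fun _ _ => c := by
  ext a b
  have hcol : ∑ i, W i b = 1 := by simpa [vecMul, dotProduct] using congrFun hW b
  simp only [mul_apply, of_apply, ← mul_sum, hcol, mul_one]

theorem mul_pow_eq_self_of_mul_eq_self {M : Type*} [Monoid M] {J W : M} (h : J * W = J) (k : ℕ) :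
    J * W ^ k = J := by
  induction k with
  | zero => rw [pow_zero, mul_one]
  | succ k ih => rw [pow_succ, ← mul_assoc, ih, h]

theorem one_sub_mul_pow_of_mul_eq_self {R : Type*} [Ring R] {J W : R} (h : J * W = J) (k : ℕ) :
    (1 - J) * W ^ k = W ^ k - J := by
  rw [sub_mul, one_mul, mul_pow_eq_self_of_mul_eq_self h]

section Recursion

variable {m p R : Type*} [Fintype m] [DecidableEq m] [CommRing R]
  {W : Matrix m m R} {α : R} {x g : ℕ → Matrix m p R}

theorem Matrix.eq_pow_mul_sub_smul_sum_of_recursion (hrec : ∀ k, x (k + 1) = W * x k - α • g k)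
    (k : ℕ) : x k = W ^ k * x 0 - α • ∑ t ∈ range k, W ^ t * g (k - 1 - t) := by
  induction k with
  | zero => simp
  | succ k ih =>
    have hshift : ∀ t ∈ range k,
        W ^ (t + 1) * g (k + 1 - 1 - (t + 1)) = W * (W ^ t * g (k - 1 - t)) := by
      intro t _
      rw [show k + 1 - 1 - (t + 1) = k - 1 - t by omega, pow_succ', Matrix.mul_assoc]
    rw [hrec k, ih, sum_range_succ' (fun t => W ^ t * g (k + 1 - 1 - t)), sum_congr rfl hshift,
      pow_zero, Matrix.one_mul, Nat.add_sub_cancel, Nat.sub_zero, Matrix.mul_sub,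
      Matrix.mul_smul, Matrix.mul_sum, ← Matrix.mul_assoc, ← pow_succ', smul_add]
    abel

theorem Matrix.one_sub_mul_eq_of_recursion {J : Matrix m m R} (hJW : J * W = J)
    (hrec : ∀ k, x (k + 1) = W * x k - α • g k) (k : ℕ) :
    (1 - J) * x k = (W ^ k - J) * x 0 - α • ∑ t ∈ range k, (W ^ t - J) * g (k - 1 - t) := by
  simp only [eq_pow_mul_sub_smul_sum_of_recursion hrec k, Matrix.mul_sub, Matrix.mul_smul,
    Matrix.mul_sum, ← Matrix.mul_assoc, one_sub_mul_pow_of_mul_eq_self hJW]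

end Recursion

section FrobeniusBounds

variable {l m p : Type*} [Fintype l] [Fintype m] [Fintype p]

theorem frob_eq_norm (A : Matrix m p ℝ) : frob A = ‖A‖ := by
  rw [frob, frobenius_norm_def, Real.sqrt_eq_rpow]
  congr 1
  refine sum_congr rfl fun i _ => sum_congr rfl fun j _ => ?_
  rw [Real.norm_eq_abs, Real.rpow_two, sq_abs]

theorem sqrt_sum_row_sq_le_frob (A : Matrix m p ℝ) (i : m) :
    Real.sqrt (∑ j, A i j ^ 2) ≤ frob A :=
  Real.sqrt_le_sqrt <| single_le_sum (f := fun i => ∑ j, A i j ^ 2)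
    (fun _ _ => sum_nonneg fun _ _ => sq_nonneg _) (mem_univ i)

theorem norm_sum_range_mul_le_of_geometric {A : ℕ → Matrix l m ℝ} {B : ℕ → Matrix m p ℝ}
    {C ζ D : ℝ} (hC : 0 ≤ C) (hζ0 : 0 ≤ ζ) (hζ1 : ζ < 1) (hD : 0 ≤ D)
    (hA : ∀ t, ‖A t‖ ≤ C * ζ ^ t) (hB : ∀ t, ‖B t‖ ≤ D) (k : ℕ) :
    ‖∑ t ∈ range k, A t * B t‖ ≤ C * D / (1 - ζ) :=
  calc ‖∑ t ∈ range k, A t * B t‖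
      ≤ ∑ t ∈ range k, C * ζ ^ t * D :=
        (norm_sum_le _ _).trans <| sum_le_sum fun t _ => (frobenius_norm_mul _ _).trans <|
          mul_le_mul_of_nonneg (hA t) (hB t) (norm_nonneg _) hD
    _ = C * D * ∑ t ∈ Ico 0 k, ζ ^ t := by
        rw [range_eq_Ico, mul_sum]
        exact sum_congr rfl fun t _ => by ring
    _ ≤ C * D * (ζ ^ 0 / (1 - ζ)) :=
        mul_le_mul_of_nonneg_left (geom_sum_Ico_le_of_lt_one hζ0 hζ1) (mul_nonneg hC hD)
    _ = C * D / (1 - ζ) := by rw [pow_zero, mul_one_div]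

end FrobeniusBounds

theorem stmt9_general {n p : ℕ} (W : Matrix (Fin n) (Fin n) ℝ)
    (C ζ α D : ℝ) (hC : 0 < C) (hζ0 : 0 ≤ ζ) (hζ1 : ζ < 1) (hα : 0 < α) (hD : 0 ≤ D)
    (hsym : W.transpose = W) (hones : W.mulVec 1 = 1)
    (hWk : ∀ j : ℕ,
      frob (W ^ j - Matrix.of fun _ _ : Fin n => (1 : ℝ) / n) ≤ C * ζ ^ j)
    (x g : ℕ → Matrix (Fin n) (Fin p) ℝ)
    (hg : ∀ k, frob (g k) ≤ D)
    (hrec : ∀ k, x (k + 1) = W * x k - α • g k)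
    (k : ℕ) (i : Fin n) :
    Real.sqrt (∑ j, (x k i j - ((Matrix.of fun _ _ : Fin n => (1 : ℝ) / n) * x k) i j) ^ 2)
      ≤ C * ζ ^ k * frob (x 0) + α * D * C / (1 - ζ) := by
  set J : Matrix (Fin n) (Fin n) ℝ := Matrix.of fun _ _ : Fin n => (1 : ℝ) / n
  have hJW : J * W = J :=
    of_const_mul_eq_of_vecMul_eq_one _ (by rw [← hsym, vecMul_transpose, hones])
  simp only [frob_eq_norm] at hWk hg ⊢
  have hdev : x k - J * x k = (1 - J) * x k := by rw [Matrix.sub_mul, Matrix.one_mul]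
  refine (sqrt_sum_row_sq_le_frob (x k - J * x k) i).trans ?_
  rw [frob_eq_norm, hdev, one_sub_mul_eq_of_recursion hJW hrec k]
  calc _ ≤ ‖(W ^ k - J) * x 0‖ + α * ‖∑ t ∈ range k, (W ^ t - J) * g (k - 1 - t)‖ :=
          (norm_sub_le _ _).trans_eq (by rw [norm_smul, Real.norm_of_nonneg hα.le])
    _ ≤ C * ζ ^ k * ‖x 0‖ + α * (C * D / (1 - ζ)) := by
          gcongr ?_ + α * ?_
          · exact (frobenius_norm_mul _ _).trans <|
              mul_le_mul_of_nonneg_right (hWk k) (norm_nonneg _)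
          · exact norm_sum_range_mul_le_of_geometric (B := fun t => g (k - 1 - t))
              hC.le hζ0 hζ1 hD hWk (fun _ => hg _) k
    _ = C * ζ ^ k * ‖x 0‖ + α * D * C / (1 - ζ) := by ring

theorem stmt9 {n p : ℕ} (hn : 0 < n) (W : Matrix (Fin n) (Fin n) ℝ)
    (C ζ α D : ℝ) (hC : 0 < C) (hζ0 : 0 ≤ ζ) (hζ1 : ζ < 1) (hα : 0 < α) (hD : 0 ≤ D)
    (hsym : W.transpose = W) (hones : W.mulVec 1 = 1)
    (hWk : ∀ j : ℕ,
      frob (W ^ j - Matrix.of fun _ _ : Fin n => (1 : ℝ) / n) ≤ C * ζ ^ j)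
    (x g : ℕ → Matrix (Fin n) (Fin p) ℝ)
    (hg : ∀ k, frob (g k) ≤ D)
    (hrec : ∀ k, x (k + 1) = W * x k - α • g k)
    (k : ℕ) (i : Fin n) :
    Real.sqrt (∑ j, (x k i j - ((Matrix.of fun _ _ : Fin n => (1 : ℝ) / n) * x k) i j) ^ 2)
      ≤ C * ζ ^ k * frob (x 0) + α * D * C / (1 - ζ) :=
  stmt9_general W C ζ α D hC hζ0 hζ1 hα hD hsym hones hWk x g hg hrec k i
end

section
/- Let {a_k} be a nonnegative sequence and ε ∈ (0,1] such that Σ_{k=0}^∞ (k+1)^ε a_k < ∞. Then min_{0 ≤ j ≤ k} a_j = o(1/k^{1+ε}). -/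
/-!
Let `m k = min_{j ≤ k} a j`, which is antitone. For `k/2 ≤ j ≤ k` we have `m k ≤ a j` and
`(k/2)^ε ≤ (j+1)^ε`, so the block of the series `∑ (j+1)^ε a j` over `[k/2, k]` is at least
`(k/2) · (k/2)^ε · m k ≈ 2^{-(1+ε)} k^{1+ε} m k`. That block is bounded by the tail of the series
from `k/2` on, which tends to zero.
-/

open Filter Topology

section WeightedTail

variable {w m : ℕ → ℝ}

theorem card_mul_le_tsum_nat_add_of_monotone_of_antitone (hw : Monotone w) (hw0 : ∀ k, 0 ≤ w k)
    (hm : Antitone m) (hm0 : ∀ k, 0 ≤ m k) (hsum : Summable fun k => w k * m k) {n k : ℕ}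
    (hnk : n ≤ k) :
    ((k + 1 - n : ℕ) : ℝ) * (w n * m k) ≤ ∑' j, w (j + n) * m (j + n) := by
  have hterm : ∀ i ∈ Finset.range (k + 1 - n), w n * m k ≤ w (i + n) * m (i + n) := by
    intro i hi
    have hik : i + n ≤ k := by simp only [Finset.mem_range] at hi; omega
    exact mul_le_mul (hw (Nat.le_add_left n i)) (hm hik) (hm0 k) (hw0 _)
  calc ((k + 1 - n : ℕ) : ℝ) * (w n * m k)
      ≤ ∑ i ∈ Finset.range (k + 1 - n), w (i + n) * m (i + n) := by
        simpa using Finset.card_nsmul_le_sum _ _ _ hterm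
    _ ≤ ∑' j, w (j + n) * m (j + n) :=
        ((summable_nat_add_iff n).2 hsum).sum_le_tsum _
          fun i _ => mul_nonneg (hw0 _) (hm0 _)

theorem tendsto_card_mul_of_monotone_of_antitone (hw : Monotone w) (hw0 : ∀ k, 0 ≤ w k)
    (hm : Antitone m) (hm0 : ∀ k, 0 ≤ m k) (hsum : Summable fun k => w k * m k) :
    Tendsto (fun k : ℕ => ((k + 1 - k / 2 : ℕ) : ℝ) * (w (k / 2) * m k)) atTop (𝓝 0) := by
  have htail : Tendsto (fun k : ℕ => ∑' j, w (j + k / 2) * m (j + k / 2)) atTop (𝓝 0) :=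
    (tendsto_sum_nat_add fun k => w k * m k).comp (Nat.tendsto_div_const_atTop two_ne_zero)
  refine squeeze_zero (fun k => ?_) (fun k => ?_) htail
  · exact mul_nonneg (Nat.cast_nonneg _) (mul_nonneg (hw0 _) (hm0 _))
  · exact card_mul_le_tsum_nat_add_of_monotone_of_antitone hw hw0 hm hm0 hsum
      (Nat.div_le_self k 2)

end WeightedTail

section RunningMin

variable {α : Type*} [SemilatticeInf α] (a : ℕ → α)

def runningMin (k : ℕ) : α := (Finset.range (k + 1)).inf' Finset.nonempty_range_add_one a

theorem runningMin_le (k : ℕ) : runningMin a k ≤ a k :=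
  Finset.inf'_le a (Finset.self_mem_range_succ k)

theorem runningMin_antitone : Antitone (runningMin a) := fun i j hij =>
  Finset.le_inf' _ _ fun l hl =>
    Finset.inf'_le a (by simp only [Finset.mem_range] at hl ⊢; omega)

theorem le_runningMin {b : α} (hb : ∀ k, b ≤ a k) (k : ℕ) : b ≤ runningMin a k :=
  Finset.le_inf' _ _ fun j _ => hb j

end RunningMin

theorem rpow_one_add_le_card_mul_rpow {ε : ℝ} (hε : 0 ≤ ε) (k : ℕ) :
    (k : ℝ) ^ (1 + ε) ≤
      2 ^ (1 + ε) * (((k + 1 - k / 2 : ℕ) : ℝ) * (((k / 2 : ℕ) : ℝ) + 1) ^ ε) := by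
  have hhalf : (0 : ℝ) ≤ k / 2 := by positivity
  have hcard : (k : ℝ) / 2 ≤ ((k + 1 - k / 2 : ℕ) : ℝ) := by
    rw [Nat.cast_sub (by omega)]
    push_cast
    linarith [Nat.cast_div_le (m := k) (n := 2) (α := ℝ)]
  have hfloor : (k : ℝ) / 2 ≤ ((k / 2 : ℕ) : ℝ) + 1 := by
    have : (k : ℝ) ≤ 2 * ((k / 2 : ℕ) : ℝ) + 1 := by
      exact_mod_cast (by omega : k ≤ 2 * (k / 2) + 1)
    linarith
  calc (k : ℝ) ^ (1 + ε) = 2 ^ (1 + ε) * ((k / 2) * (k / 2 : ℝ) ^ ε) := by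
        rw [← Real.rpow_one_add' hhalf (by linarith), ← Real.mul_rpow (by norm_num) hhalf]
        ring_nf
    _ ≤ _ := by gcongr

theorem stmt12 (a : ℕ → ℝ) (ε : ℝ) (hε : 0 < ε)
    (ha : ∀ k, 0 ≤ a k)
    (hsum : Summable (fun k : ℕ => ((k : ℝ) + 1) ^ ε * a k)) :
    Tendsto (fun k : ℕ => (k : ℝ) ^ (1 + ε) * (Finset.range (k + 1)).inf' ⟨0, by simp⟩ a)
      atTop (𝓝 0) := by
  set w : ℕ → ℝ := fun k => ((k : ℝ) + 1) ^ ε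
  have hw : Monotone w := fun i j hij => by dsimp only [w]; gcongr
  have hw0 : ∀ k, 0 ≤ w k := fun k => by positivity
  have hm0 : ∀ k, 0 ≤ runningMin a k := le_runningMin a ha
  have hwm : Summable fun k => w k * runningMin a k :=
    hsum.of_nonneg_of_le (fun k => mul_nonneg (hw0 k) (hm0 k))
      fun k => mul_le_mul_of_nonneg_left (runningMin_le a k) (hw0 k)
  have hlim := (tendsto_card_mul_of_monotone_of_antitone hw hw0 (runningMin_antitone a) hm0
    hwm).const_mul (2 ^ (1 + ε))
  rw [mul_zero] at hlim
  refine squeeze_zero (fun k => mul_nonneg (by positivity) (hm0 k)) (fun k => ?_) hlim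
  calc (k : ℝ) ^ (1 + ε) * runningMin a k
      ≤ 2 ^ (1 + ε) * (((k + 1 - k / 2 : ℕ) : ℝ) * w (k / 2)) * runningMin a k :=
        mul_le_mul_of_nonneg_right (rpow_one_add_le_card_mul_rpow hε.le k) (hm0 k)
    _ = _ := by ring
end

section
/- Let F : ℝ^{n×p} → ℝ be differentiable and coercive with L-Lipschitz gradient, let W satisfy the mixing-matrix assumptions, and consider L_α(x) = F(x) + (1/(2α))‖x‖²_{I−W} with 0 < α < (1+λ_n(W))/L. Then the gradient descent iterates x^{k+1} = x^k − α∇L_α(x^k) satisfy: L_α(x^k) is nonincreasing and lower bounded, Σ_k ‖x^{k+1} − x^k‖² < ∞, the sequence {x^k} is bounded, and every accumulation point x* satisfies ∇L_α(x*) = 0. -/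
open Filter Topology

open scoped RealInnerProductSpace

open Matrix in
lemma aux_rayleigh_lower {N : ℕ} {W : Matrix (Fin N) (Fin N) ℝ} (hsym : W.IsHermitian) {lam : ℝ}
    (hlb : ∀ i, lam ≤ hsym.eigenvalues i) (v : Fin N → ℝ) :
    lam * (v ⬝ᵥ v) ≤ v ⬝ᵥ W *ᵥ v := by
  classical
  set U : Matrix (Fin N) (Fin N) ℝ := (hsym.eigenvectorUnitary : Matrix (Fin N) (Fin N) ℝ) with hU
  have hUU : U * star U = 1 := (Matrix.mem_unitaryGroup_iff).mp hsym.eigenvectorUnitary.2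
  set w : Fin N → ℝ := star U *ᵥ v with hw
  have hdot : ∀ z : Fin N → ℝ, v ⬝ᵥ (U *ᵥ z) = w ⬝ᵥ z := by
    intro z
    rw [Matrix.dotProduct_mulVec, hw, Matrix.star_eq_conjTranspose,
      Matrix.conjTranspose_eq_transpose_of_trivial, Matrix.mulVec_transpose]
  have hvv : v ⬝ᵥ v = w ⬝ᵥ w := by
    have h2 : v ⬝ᵥ (U *ᵥ w) = w ⬝ᵥ w := hdot w
    rw [hw] at h2 ⊢
    rw [Matrix.mulVec_mulVec, hUU, Matrix.one_mulVec] at h2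
    exact h2
  have hquad : v ⬝ᵥ W *ᵥ v = ∑ i, hsym.eigenvalues i * (w i * w i) := by
    conv_lhs => rw [hsym.spectral_theorem, Unitary.conjStarAlgAut_apply]
    rw [mul_assoc, ← Matrix.mulVec_mulVec, hdot, ← Matrix.mulVec_mulVec]
    rw [← hw]
    simp only [dotProduct, Matrix.mulVec_diagonal]
    apply Finset.sum_congr rfl
    intro i _
    simp [RCLike.ofReal]
    ring
  rw [hvv, hquad, dotProduct]
  rw [Finset.mul_sum]
  apply Finset.sum_le_sum
  intro i _
  nlinarith [hlb i, mul_self_nonneg (w i)]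

open Matrix in
lemma aux_neg_one_lt {N : ℕ} {W : Matrix (Fin N) (Fin N) ℝ} (hsym : W.IsHermitian)
    (hpd : (W + (1 : Matrix (Fin N) (Fin N) ℝ)).PosDef) {lam : ℝ} {i : Fin N}
    (hi : hsym.eigenvalues i = lam) : -1 < lam := by
  classical
  set u : Fin N → ℝ := ⇑(hsym.eigenvectorBasis i) with hu
  have hu1 : ‖hsym.eigenvectorBasis i‖ = 1 := hsym.eigenvectorBasis.orthonormal.1 i
  have hune : u ≠ 0 := by
    intro h
    have : (hsym.eigenvectorBasis i : EuclideanSpace ℝ (Fin N)) = 0 := by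
      apply PiLp.ext; intro j; exact congrFun h j
    rw [this] at hu1; simp at hu1
  have hmv : (W + 1) *ᵥ u = (lam + 1) • u := by
    rw [Matrix.add_mulVec, Matrix.one_mulVec, hu, hsym.mulVec_eigenvectorBasis, hi, add_smul,
      one_smul]
  have hpos := hpd.dotProduct_mulVec_pos hune
  rw [hmv] at hpos
  have huu : 0 < u ⬝ᵥ u := by
    rcases Function.ne_iff.mp hune with ⟨j, hj⟩
    have h0 : ∀ k, 0 ≤ u k * u k := fun k => mul_self_nonneg _
    have hlt : 0 < u j * u j := mul_self_pos.mpr hj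
    exact Finset.sum_pos' (fun k _ => h0 k) ⟨j, Finset.mem_univ j, hlt⟩
  have hsd : star u ⬝ᵥ (lam + 1) • u = (lam + 1) * (u ⬝ᵥ u) := by
    simp [dotProduct_smul, star_trivial]
  rw [hsd] at hpos
  nlinarith

lemma aux_descent_lemma {E : Type*} [NormedAddCommGroup E] [InnerProductSpace ℝ E]
    [CompleteSpace E] {f : E → ℝ} {g : E → E} {L : ℝ}
    (hg : ∀ y, HasGradientAt f (g y) y)
    (hlip : ∀ u v, ‖g u - g v‖ ≤ L * ‖u - v‖) (x d : E) :
    f (x + d) ≤ f x + ⟪g x, d⟫ + L / 2 * ‖d‖ ^ 2 := by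
  set φ : ℝ → ℝ := fun t => f (x + t • d) - t * ⟪g x, d⟫ - L / 2 * t ^ 2 * ‖d‖ ^ 2 with hφ
  have hderiv : ∀ t : ℝ, HasDerivAt φ (⟪g (x + t • d), d⟫ - ⟪g x, d⟫ - L * t * ‖d‖ ^ 2) t := by
    intro t
    have hc : HasDerivAt (fun t : ℝ => x + t • d) d t := by
      simpa using ((hasDerivAt_id t).smul_const d).const_add x
    have h1 : HasDerivAt (fun t : ℝ => f (x + t • d)) ⟪g (x + t • d), d⟫ t := by
      have := (hg (x + t • d)).hasFDerivAt.comp_hasDerivAt t hc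
      exact this
    have h2 : HasDerivAt (fun t : ℝ => t * ⟪g x, d⟫) ⟪g x, d⟫ t := by
      simpa using (hasDerivAt_id t).mul_const ⟪g x, d⟫
    have h3 : HasDerivAt (fun t : ℝ => L / 2 * t ^ 2 * ‖d‖ ^ 2) (L * t * ‖d‖ ^ 2) t := by
      have h := ((hasDerivAt_pow 2 t).const_mul (L / 2)).mul_const (‖d‖ ^ 2)
      refine h.congr_deriv ?_
      ring
    exact (h1.sub h2).sub h3
  have hanti : AntitoneOn φ (Set.Icc (0:ℝ) 1) := by
    apply antitoneOn_of_deriv_nonpos (convex_Icc 0 1)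
    · exact fun t _ => (hderiv t).continuousAt.continuousWithinAt
    · exact fun t _ => (hderiv t).differentiableAt.differentiableWithinAt
    · intro t ht
      rw [interior_Icc] at ht
      rw [(hderiv t).deriv]
      have h1 : ⟪g (x + t • d), d⟫ - ⟪g x, d⟫ = ⟪g (x + t • d) - g x, d⟫ :=
        (inner_sub_left _ _ _).symm
      have h2 : ⟪g (x + t • d) - g x, d⟫ ≤ ‖g (x + t • d) - g x‖ * ‖d‖ := real_inner_le_norm _ _
      have h3 : ‖g (x + t • d) - g x‖ ≤ L * ‖t • d‖ := by simpa using hlip (x + t • d) x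
      have h4 : ‖t • d‖ = t * ‖d‖ := by rw [norm_smul]; simp [abs_of_pos ht.1]
      rw [h4] at h3
      rw [h1]
      nlinarith [norm_nonneg d, ht.1.le, norm_nonneg (g (x + t • d) - g x)]
  have hfin := hanti (Set.left_mem_Icc.mpr zero_le_one) (Set.right_mem_Icc.mpr zero_le_one)
    zero_le_one
  have h0 : φ 0 = f x := by simp [hφ]
  have h1 : φ 1 = f (x + d) - ⟪g x, d⟫ - L / 2 * ‖d‖ ^ 2 := by simp [hφ]
  rw [h0, h1] at hfin
  linarith

noncomputable def Tmap {n p : ℕ} (A : Matrix (Fin n) (Fin n) ℝ) :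
    EuclideanSpace ℝ (Fin n × Fin p) →L[ℝ] EuclideanSpace ℝ (Fin n × Fin p) :=
  LinearMap.toContinuousLinearMap
  { toFun := fun v => WithLp.toLp 2 (fun q : Fin n × Fin p => ∑ i', A q.1 i' * v (i', q.2))
    map_add' := by
      intro u v; ext q
      simp only [PiLp.add_apply]
      rw [← Finset.sum_add_distrib]
      congr 1; funext i'; ring
    map_smul' := by
      intro c v; ext q
      simp only [PiLp.smul_apply, smul_eq_mul, RingHom.id_apply, Finset.mul_sum]
      congr 1; funext i'; ring }

lemma Tmap_apply {n p : ℕ} (A : Matrix (Fin n) (Fin n) ℝ)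
    (v : EuclideanSpace ℝ (Fin n × Fin p)) (q : Fin n × Fin p) :
    Tmap A v q = ∑ i', A q.1 i' * v (i', q.2) := rfl

lemma inner_Tmap {n p : ℕ} (A : Matrix (Fin n) (Fin n) ℝ)
    (u v : EuclideanSpace ℝ (Fin n × Fin p)) :
    ⟪u, Tmap A v⟫ = ∑ j : Fin p, ∑ i : Fin n, ∑ i' : Fin n, A i i' * u (i, j) * v (i', j) := by
  rw [PiLp.inner_apply]
  simp only [RCLike.inner_apply, conj_trivial, Tmap_apply]
  rw [Fintype.sum_prod_type]
  rw [Finset.sum_comm]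
  congr 1; funext j; congr 1; funext i
  rw [Finset.sum_mul]
  congr 1; funext i'; ring

lemma Tmap_selfAdj {n p : ℕ} {A : Matrix (Fin n) (Fin n) ℝ} (hA : ∀ i i', A i i' = A i' i)
    (u v : EuclideanSpace ℝ (Fin n × Fin p)) :
    ⟪Tmap A u, v⟫ = ⟪u, Tmap A v⟫ := by
  rw [real_inner_comm, inner_Tmap, inner_Tmap]
  congr 1; funext j
  rw [Finset.sum_comm]
  congr 1; funext i; congr 1; funext i'
  rw [hA i i']; ring

lemma quad_columns {n p : ℕ} (A : Matrix (Fin n) (Fin n) ℝ)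
    (v : EuclideanSpace ℝ (Fin n × Fin p)) :
    ⟪v, Tmap A v⟫ = ∑ j : Fin p,
      dotProduct (fun i => v (i, j)) (A.mulVec (fun i => v (i, j))) := by
  rw [inner_Tmap]
  congr 1; funext j
  rw [dotProduct]
  congr 1; funext i
  rw [Matrix.mulVec, dotProduct, Finset.mul_sum]
  congr 1; funext i'; ring

lemma norm_sq_columns {n p : ℕ} (v : EuclideanSpace ℝ (Fin n × Fin p)) :
    ‖v‖ ^ 2 = ∑ j : Fin p, dotProduct (fun i => v (i, j)) (fun i => v (i, j)) := by
  rw [← real_inner_self_eq_norm_sq, PiLp.inner_apply]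
  simp only [RCLike.inner_apply, conj_trivial]
  rw [Fintype.sum_prod_type, Finset.sum_comm]
  rfl

lemma hasGradientAt_quad {n p : ℕ} {A : Matrix (Fin n) (Fin n) ℝ}
    (hA : ∀ i i', A i i' = A i' i) (c : ℝ) (x : EuclideanSpace ℝ (Fin n × Fin p)) :
    HasGradientAt (fun v => c * ⟪v, Tmap A v⟫) ((2 * c) • Tmap A x) x := by
  rw [hasGradientAt_iff_hasFDerivAt]
  have h := ((hasFDerivAt_id x).inner ℝ ((Tmap A).hasFDerivAt (x := x))).const_mul c
  refine h.congr_fderiv ?_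
  apply ContinuousLinearMap.ext
  intro w
  simp only [ContinuousLinearMap.smul_apply, ContinuousLinearMap.comp_apply,
    ContinuousLinearMap.prod_apply, ContinuousLinearMap.coe_id', id_eq, fderivInnerCLM_apply,
    InnerProductSpace.toDual_apply_apply, smul_eq_mul]
  rw [real_inner_smul_left]
  have h1 : ⟪x, Tmap A w⟫ = ⟪Tmap A x, w⟫ := (Tmap_selfAdj hA x w).symm
  have h2 : ⟪w, Tmap A x⟫ = ⟪Tmap A x, w⟫ := real_inner_comm _ _
  rw [h1, h2]
  ring

set_option maxHeartbeats 2000000 in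
theorem stmt13 {n p : ℕ} (hn : 0 < n)
    (F : EuclideanSpace ℝ (Fin n × Fin p) → ℝ) (Lf α lamMin : ℝ)
    (W : Matrix (Fin n) (Fin n) ℝ) (hsym : W.IsHermitian)
    (hker : LinearMap.ker (Matrix.mulVecLin ((1 : Matrix (Fin n) (Fin n) ℝ) - W)) =
      Submodule.span ℝ {(1 : Fin n → ℝ)})
    (hpsd : ((1 : Matrix (Fin n) (Fin n) ℝ) - W).PosSemidef)
    (hpd : (W + (1 : Matrix (Fin n) (Fin n) ℝ)).PosDef)
    (hlam : (∀ i, lamMin ≤ hsym.eigenvalues i) ∧ ∃ i, hsym.eigenvalues i = lamMin)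
    (hF : Differentiable ℝ F)
    (hcoer : ∀ M : ℝ, ∃ R : ℝ, ∀ x : EuclideanSpace ℝ (Fin n × Fin p), R ≤ ‖x‖ → M ≤ F x)
    (hLf : 0 < Lf)
    (hlip : ∀ x y : EuclideanSpace ℝ (Fin n × Fin p),
      ‖gradient F x - gradient F y‖ ≤ Lf * ‖x - y‖)
    (hα0 : 0 < α) (hα1 : α < (1 + lamMin) / Lf)
    (Lα : EuclideanSpace ℝ (Fin n × Fin p) → ℝ)
    (hLα : ∀ x : EuclideanSpace ℝ (Fin n × Fin p),
      Lα x = F x + (1 / (2 * α)) * ∑ j : Fin p, ∑ i : Fin n, ∑ i' : Fin n,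
        ((1 : Matrix (Fin n) (Fin n) ℝ) - W) i i' * x (i, j) * x (i', j))
    (x : ℕ → EuclideanSpace ℝ (Fin n × Fin p))
    (hrec : ∀ k, x (k + 1) = x k - α • gradient Lα (x k)) :
    (∀ k, Lα (x (k + 1)) ≤ Lα (x k)) ∧
    (∃ m : ℝ, ∀ k, m ≤ Lα (x k)) ∧
    Summable (fun k => ‖x (k + 1) - x k‖ ^ 2) ∧
    (∃ R : ℝ, ∀ k, ‖x k‖ ≤ R) ∧
    (∀ xstar : EuclideanSpace ℝ (Fin n × Fin p),
      MapClusterPt xstar atTop x → gradient Lα xstar = 0) := by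
  classical
  set A : Matrix (Fin n) (Fin n) ℝ := (1 : Matrix (Fin n) (Fin n) ℝ) - W with hA
  have hAsym : ∀ i i', A i i' = A i' i := by
    intro i i'
    have h := congrFun (congrFun hpsd.1 i') i
    simpa [Matrix.conjTranspose_apply] using h
  have hα : α ≠ 0 := ne_of_gt hα0
  have hc0 : (0:ℝ) ≤ 1 / (2 * α) := by positivity
  have h2c : 2 * (1 / (2 * α)) = α⁻¹ := by field_simp
  have hLαeq : ∀ v, Lα v = F v + (1 / (2 * α)) * ⟪v, Tmap A v⟫ := by
    intro v
    rw [hLα v, inner_Tmap]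
  have hgF : ∀ v, HasGradientAt F (gradient F v) v := fun v => (hF v).hasGradientAt
  have hgrad : ∀ v, HasGradientAt Lα (gradient F v + α⁻¹ • Tmap A v) v := by
    intro v
    have hq := hasGradientAt_quad (p := p) hAsym (1 / (2 * α)) v
    rw [h2c] at hq
    have hsum := (hasGradientAt_iff_hasFDerivAt.mp (hgF v)).add
      (hasGradientAt_iff_hasFDerivAt.mp hq)
    rw [← map_add] at hsum
    have hres := hasGradientAt_iff_hasFDerivAt.mpr hsum
    rw [show Lα = (fun v => F v + (1 / (2 * α)) * ⟪v, Tmap A v⟫) from funext hLαeq]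
    exact hres
  have hGL : ∀ v, gradient Lα v = gradient F v + α⁻¹ • Tmap A v := fun v => (hgrad v).gradient
  have hgFcont : Continuous (gradient F) := by
    have hl : LipschitzWith ⟨Lf, hLf.le⟩ (gradient F) := by
      apply LipschitzWith.of_dist_le_mul
      intro u v
      rw [dist_eq_norm, dist_eq_norm]
      exact hlip u v
    exact hl.continuous
  have hGcont : Continuous (fun v : EuclideanSpace ℝ (Fin n × Fin p) =>
      gradient F v + α⁻¹ • Tmap A v) :=
    hgFcont.add (((Tmap A).continuous).const_smul α⁻¹)
  have hnn : ∀ v : EuclideanSpace ℝ (Fin n × Fin p), 0 ≤ ⟪v, Tmap A v⟫ := by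
    intro v
    rw [quad_columns]
    apply Finset.sum_nonneg
    intro j _
    have h := hpsd.dotProduct_mulVec_nonneg (fun i => v (i, j))
    simpa using h
  have hub : ∀ v : EuclideanSpace ℝ (Fin n × Fin p),
      ⟪v, Tmap A v⟫ ≤ (1 - lamMin) * ‖v‖ ^ 2 := by
    intro v
    rw [quad_columns, norm_sq_columns, Finset.mul_sum]
    apply Finset.sum_le_sum
    intro j _
    set u : Fin n → ℝ := fun i => v (i, j) with hu
    have hray := aux_rayleigh_lower hsym hlam.1 u
    have hAu : dotProduct u (A.mulVec u)
        = dotProduct u u - dotProduct u (W.mulVec u) := by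
      rw [hA, Matrix.sub_mulVec, Matrix.one_mulVec, dotProduct_sub]
    rw [hAu]
    have hr : (1 - lamMin) * dotProduct u u
        = dotProduct u u - lamMin * dotProduct u u := by ring
    linarith
  have hlm : -1 < lamMin := by
    obtain ⟨i, hi⟩ := hlam.2
    exact aux_neg_one_lt hsym hpd hi
  have hαLf : α * Lf < 1 + lamMin := by
    have h := (lt_div_iff₀ hLf).mp hα1
    linarith
  set κ : ℝ := (1 + lamMin - α * Lf) / (2 * α) with hκdef
  have hκ : 0 < κ := by
    apply div_pos
    · linarith
    · linarith
  have key : ∀ k, Lα (x (k + 1)) + κ * ‖x (k + 1) - x k‖ ^ 2 ≤ Lα (x k) := by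
    intro k
    set X := x k with hX
    set g := gradient Lα X with hg
    set d : EuclideanSpace ℝ (Fin n × Fin p) := x (k + 1) - x k with hd
    have hdg : d = -(α • g) := by
      rw [hd, hrec k, hg, hX]
      abel
    have hx1 : x (k + 1) = X + d := by rw [hd, hX]; abel
    have hF1 : F (X + d) ≤ F X + ⟪gradient F X, d⟫ + Lf / 2 * ‖d‖ ^ 2 :=
      aux_descent_lemma hgF hlip X d
    have hQ1 : (1 / (2 * α)) * ⟪X + d, Tmap A (X + d)⟫
        = (1 / (2 * α)) * ⟪X, Tmap A X⟫ + α⁻¹ * ⟪Tmap A X, d⟫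
          + (1 / (2 * α)) * ⟪d, Tmap A d⟫ := by
      rw [map_add, inner_add_left, inner_add_right, inner_add_right]
      have e1 : ⟪X, Tmap A d⟫ = ⟪Tmap A X, d⟫ := (Tmap_selfAdj hAsym X d).symm
      have e2 : ⟪d, Tmap A X⟫ = ⟪Tmap A X, d⟫ := real_inner_comm _ _
      rw [e1, e2, ← h2c]
      ring
    have hQ2 : (1 / (2 * α)) * ⟪d, Tmap A d⟫ ≤ (1 - lamMin) * (1 / (2 * α)) * ‖d‖ ^ 2 := by
      have h := hub d
      have h2 := mul_le_mul_of_nonneg_left h hc0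
      calc (1 / (2 * α)) * ⟪d, Tmap A d⟫ ≤ (1 / (2 * α)) * ((1 - lamMin) * ‖d‖ ^ 2) := h2
        _ = (1 - lamMin) * (1 / (2 * α)) * ‖d‖ ^ 2 := by ring
    have hip : ⟪gradient F X, d⟫ + α⁻¹ * ⟪Tmap A X, d⟫ = ⟪g, d⟫ := by
      rw [hg, hGL X, inner_add_left, real_inner_smul_left]
    have hgd : ⟪g, d⟫ = -(α⁻¹ * ‖d‖ ^ 2) := by
      have hgd2 : g = -(α⁻¹ • d) := by
        rw [hdg]
        rw [smul_neg, smul_smul, inv_mul_cancel₀ hα, one_smul, neg_neg]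
      rw [hgd2, inner_neg_left, real_inner_smul_left, real_inner_self_eq_norm_sq]
    have hLx1 : Lα (x (k + 1)) = F (X + d) + (1 / (2 * α)) * ⟪X + d, Tmap A (X + d)⟫ := by
      rw [hx1]; exact hLαeq _
    have hLX : Lα X = F X + (1 / (2 * α)) * ⟪X, Tmap A X⟫ := hLαeq X
    have hzero : Lf / 2 * ‖d‖ ^ 2 + (1 - lamMin) * (1 / (2 * α)) * ‖d‖ ^ 2
        - α⁻¹ * ‖d‖ ^ 2 + κ * ‖d‖ ^ 2 = 0 := by
      have hco : -(α⁻¹) + Lf / 2 + (1 - lamMin) * (1 / (2 * α)) + κ = 0 := by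
        rw [hκdef]
        field_simp
        ring
      linear_combination ‖d‖ ^ 2 * hco
    rw [hLx1, hLX, hQ1]
    linarith
  have hpos : ∀ k, 0 ≤ κ * ‖x (k + 1) - x k‖ ^ 2 := fun k => by positivity
  have hmono : ∀ k, Lα (x (k + 1)) ≤ Lα (x k) := fun k => by
    have h1 := key k; have h2 := hpos k; linarith
  have hchain : ∀ k, Lα (x k) ≤ Lα (x 0) := by
    intro k
    induction k with
    | zero => exact le_refl _
    | succ k ih => exact (hmono k).trans ih
  obtain ⟨R0, hR0⟩ := hcoer 0
  have hScomp : IsCompact (Metric.closedBall (0 : EuclideanSpace ℝ (Fin n × Fin p)) (max R0 0)) :=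
    isCompact_closedBall _ _
  have hSne : (Metric.closedBall (0 : EuclideanSpace ℝ (Fin n × Fin p)) (max R0 0)).Nonempty :=
    ⟨0, by simp⟩
  obtain ⟨a, _, ha⟩ := hScomp.exists_isMinOn hSne hF.continuous.continuousOn
  rw [isMinOn_iff] at ha
  have hFlb : ∀ v, min (F a) 0 ≤ F v := by
    intro v
    by_cases hv : ‖v‖ ≤ max R0 0
    · refine le_trans (min_le_left _ _) (ha v ?_)
      simpa [Metric.mem_closedBall, dist_zero_right] using hv
    · push_neg at hv
      have h1 : R0 ≤ ‖v‖ := le_trans (le_max_left _ _) hv.le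
      exact le_trans (min_le_right _ _) (hR0 v h1)
  have hLlb : ∀ v, min (F a) 0 ≤ Lα v := by
    intro v
    rw [hLαeq v]
    have h1 := hFlb v
    have h2 := mul_nonneg hc0 (hnn v)
    linarith
  have hsum_le : ∀ N, ∑ k ∈ Finset.range N, κ * ‖x (k + 1) - x k‖ ^ 2
      ≤ Lα (x 0) - min (F a) 0 := by
    intro N
    have htel : ∑ k ∈ Finset.range N, κ * ‖x (k + 1) - x k‖ ^ 2 ≤ Lα (x 0) - Lα (x N) := by
      induction N with
      | zero => simp
      | succ N ih =>
        rw [Finset.sum_range_succ]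
        have h := key N
        linarith
    linarith [hLlb (x N)]
  have hsummable' : Summable (fun k => κ * ‖x (k + 1) - x k‖ ^ 2) :=
    summable_of_sum_range_le (fun k => hpos k) hsum_le
  have hsummable : Summable (fun k => ‖x (k + 1) - x k‖ ^ 2) := by
    have h := hsummable'.mul_left κ⁻¹
    have he : (fun k => κ⁻¹ * (κ * ‖x (k + 1) - x k‖ ^ 2)) = fun k => ‖x (k + 1) - x k‖ ^ 2 := by
      funext k
      rw [← mul_assoc, inv_mul_cancel₀ hκ.ne', one_mul]
    rwa [he] at h
  obtain ⟨R1, hR1⟩ := hcoer (Lα (x 0) + 1)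
  refine ⟨hmono, ⟨min (F a) 0, fun k => hLlb (x k)⟩, hsummable, ⟨max R1 0, fun k => ?_⟩, ?_⟩
  · by_contra hk
    push_neg at hk
    have h1 : R1 ≤ ‖x k‖ := le_trans (le_max_left _ _) hk.le
    have h2 := hR1 (x k) h1
    have h3 : F (x k) ≤ Lα (x k) := by
      rw [hLαeq]
      have := mul_nonneg hc0 (hnn (x k))
      linarith
    linarith [hchain k]
  · intro xstar hcl
    have hd0 : Tendsto (fun k => x (k + 1) - x k) atTop (𝓝 0) := by
      have h2 : Tendsto (fun k => ‖x (k + 1) - x k‖ ^ 2) atTop (𝓝 0) :=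
        hsummable.tendsto_atTop_zero
      rw [tendsto_zero_iff_norm_tendsto_zero]
      have h3 : Tendsto (fun k => Real.sqrt (‖x (k + 1) - x k‖ ^ 2)) atTop (𝓝 (Real.sqrt 0)) :=
        (Real.continuous_sqrt.tendsto 0).comp h2
      have he : (fun k => Real.sqrt (‖x (k + 1) - x k‖ ^ 2)) = fun k => ‖x (k + 1) - x k‖ := by
        funext k
        exact Real.sqrt_sq (norm_nonneg _)
      rw [he] at h3
      simpa using h3
    have heq : (fun k => gradient Lα (x k)) = fun k => (-(α⁻¹)) • (x (k + 1) - x k) := by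
      funext k
      rw [hrec k]
      rw [show x k - α • gradient Lα (x k) - x k = -(α • gradient Lα (x k)) by abel]
      rw [smul_neg, neg_smul, neg_neg, smul_smul, inv_mul_cancel₀ hα, one_smul]
    have hgtend : Tendsto (fun k => gradient Lα (x k)) atTop (𝓝 0) := by
      rw [heq]
      simpa using hd0.const_smul (-(α⁻¹))
    have hGx : (fun k => gradient Lα (x k))
        = ((fun v => gradient F v + α⁻¹ • Tmap A v) ∘ x) := funext fun k => hGL (x k)
    have hclG : MapClusterPt ((fun v => gradient F v + α⁻¹ • Tmap A v) xstar) atTop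
        ((fun v => gradient F v + α⁻¹ • Tmap A v) ∘ x) :=
      hcl.tendsto_comp (hGcont.tendsto xstar)
    have hten : Tendsto ((fun v => gradient F v + α⁻¹ • Tmap A v) ∘ x) atTop (𝓝 0) := by
      rw [← hGx]; exact hgtend
    have hclu : ClusterPt ((fun v => gradient F v + α⁻¹ • Tmap A v) xstar) (𝓝 0) :=
      (hclG.clusterPt).mono hten
    have hGeq : (fun v => gradient F v + α⁻¹ • Tmap A v) xstar = 0 := eq_of_nhds_neBot hclu
    rw [hGL xstar]
    exact hGeq
end

section
/- Suppose x^k ∈ ℝ^{n×p} satisfy ‖x^{k+1} − x̄^{k+1}‖ ≤ C(‖x^0‖ζ^{k+1} + B Σ_{j=0}^{k} α_j ζ^{k−j}) with 0 ≤ ζ < 1 and α_k ≥ 0. Then Σ_{k=0}^K α_k ‖x^{k+1} − x̄^{k+1}‖ ≤ D_1 + D_2 Σ_{k=0}^K α_k², where D_1 = C‖x^0‖ζ/(2(1−ζ)) and D_2 = C(‖x^0‖ζ/2 + B/(1−ζ)). -/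
/-!
Multiply the consensus bound by `α k` and sum. The term with `‖x⁰‖ ζ^(k+1)` is handled by
`α ≤ (1 + α²)/2` and a geometric series. The convolution term is the quadratic form of the
lower-triangular kernel `ζ^(k-j)`, whose row and column sums are at most `1/(1-ζ)`; by
`2 a b ≤ a² + b²` (a Schur test) the form is at most `1/(1-ζ) ∑ α_k²`.
-/

open Finset

section Geometric

variable {ζ : ℝ} (hζ0 : 0 ≤ ζ) (hζ1 : ζ < 1)
include hζ0 hζ1

lemma geom_sum_range_le (m : ℕ) : ∑ i ∈ range m, ζ ^ i ≤ 1 / (1 - ζ) := by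
  simpa using geom_sum_Ico_le_of_lt_one hζ0 hζ1 (m := 0) (n := m)

lemma sum_range_pow_sub_le (k : ℕ) : ∑ j ∈ range (k + 1), ζ ^ (k - j) ≤ 1 / (1 - ζ) := by
  have hreflect := sum_range_reflect (ζ ^ ·) (k + 1)
  simp only [add_tsub_cancel_right] at hreflect
  exact hreflect ▸ geom_sum_range_le hζ0 hζ1 (k + 1)

lemma sum_Ico_pow_sub_le (j N : ℕ) : ∑ k ∈ Ico j N, ζ ^ (k - j) ≤ 1 / (1 - ζ) := by
  rw [sum_Ico_eq_sum_range]
  simpa only [add_tsub_cancel_left] using geom_sum_range_le hζ0 hζ1 (N - j)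

lemma sum_mul_pow_succ_le (a : ℕ → ℝ) (N : ℕ) :
    ∑ k ∈ range N, a k * ζ ^ (k + 1)
      ≤ ζ / (2 * (1 - ζ)) + ζ / 2 * ∑ k ∈ range N, a k ^ 2 := by
  have hgeom : ∑ k ∈ range N, ζ ^ (k + 1) ≤ ζ / (1 - ζ) := by
    simp_rw [pow_succ', ← mul_sum]
    exact (mul_le_mul_of_nonneg_left (geom_sum_range_le hζ0 hζ1 N) hζ0).trans_eq (mul_one_div _ _)
  have hterm (k : ℕ) : a k * ζ ^ (k + 1) ≤ ζ ^ (k + 1) / 2 + ζ / 2 * a k ^ 2 := by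
    have hpow : ζ ^ (k + 1) ≤ ζ := pow_le_of_le_one hζ0 hζ1.le k.succ_ne_zero
    nlinarith [sq_nonneg (a k - 1), pow_nonneg hζ0 (k + 1)]
  calc ∑ k ∈ range N, a k * ζ ^ (k + 1)
      ≤ ∑ k ∈ range N, (ζ ^ (k + 1) / 2 + ζ / 2 * a k ^ 2) := sum_le_sum fun k _ => hterm k
    _ = (∑ k ∈ range N, ζ ^ (k + 1)) / 2 + ζ / 2 * ∑ k ∈ range N, a k ^ 2 := by
      rw [sum_add_distrib, sum_div, mul_sum]
    _ ≤ ζ / (2 * (1 - ζ)) + ζ / 2 * ∑ k ∈ range N, a k ^ 2 := by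
      rw [mul_comm 2, ← div_div]
      gcongr

end Geometric

theorem sum_range_sum_range_succ_mul_mul_le {w : ℕ → ℕ → ℝ} {R : ℝ} {N : ℕ}
    (hw : ∀ k j, 0 ≤ w k j) (hrow : ∀ k, ∑ j ∈ range (k + 1), w k j ≤ R)
    (hcol : ∀ j, ∑ k ∈ Ico j N, w k j ≤ R) (a : ℕ → ℝ) :
    ∑ k ∈ range N, ∑ j ∈ range (k + 1), a k * a j * w k j ≤ R * ∑ k ∈ range N, a k ^ 2 := by
  have hrows : ∑ k ∈ range N, ∑ j ∈ range (k + 1), a k ^ 2 * w k j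
      ≤ R * ∑ k ∈ range N, a k ^ 2 := by
    rw [mul_sum]
    refine sum_le_sum fun k _ => ?_
    rw [← mul_sum, mul_comm R]
    exact mul_le_mul_of_nonneg_left (hrow k) (sq_nonneg _)
  have hcols : ∑ k ∈ range N, ∑ j ∈ range (k + 1), a j ^ 2 * w k j
      ≤ R * ∑ k ∈ range N, a k ^ 2 := by
    have hswap := sum_Ico_Ico_comm 0 N fun j k => a j ^ 2 * w k j
    simp only [← range_eq_Ico] at hswap
    rw [← hswap, mul_sum]
    refine sum_le_sum fun j _ => ?_
    rw [← mul_sum, mul_comm R]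
    exact mul_le_mul_of_nonneg_left (hcol j) (sq_nonneg _)
  calc ∑ k ∈ range N, ∑ j ∈ range (k + 1), a k * a j * w k j
      ≤ ∑ k ∈ range N, ∑ j ∈ range (k + 1), (a k ^ 2 * w k j / 2 + a j ^ 2 * w k j / 2) := by
        refine sum_le_sum fun k _ => sum_le_sum fun j _ => ?_
        nlinarith [mul_nonneg (sq_nonneg (a k - a j)) (hw k j)]
    _ ≤ R * ∑ k ∈ range N, a k ^ 2 := by
        simp only [sum_add_distrib, ← sum_div]
        linarith

theorem sum_mul_le_of_le_geometric_conv {C B ζ r : ℝ} (hC : 0 ≤ C) (hB : 0 ≤ B) (hr : 0 ≤ r)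
    (hζ0 : 0 ≤ ζ) (hζ1 : ζ < 1) {α e : ℕ → ℝ} (hα : ∀ k, 0 ≤ α k)
    (he : ∀ k, e k ≤ C * (r * ζ ^ (k + 1) + B * ∑ j ∈ range (k + 1), α j * ζ ^ (k - j)))
    (N : ℕ) :
    ∑ k ∈ range N, α k * e k
      ≤ C * r * ζ / (2 * (1 - ζ)) + C * (r * ζ / 2 + B / (1 - ζ)) * ∑ k ∈ range N, α k ^ 2 := by
  have hconv := sum_range_sum_range_succ_mul_mul_le (N := N) (fun k j => pow_nonneg hζ0 (k - j))
    (sum_range_pow_sub_le hζ0 hζ1) (fun j => sum_Ico_pow_sub_le hζ0 hζ1 j N) α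
  calc ∑ k ∈ range N, α k * e k
      ≤ ∑ k ∈ range N,
          α k * (C * (r * ζ ^ (k + 1) + B * ∑ j ∈ range (k + 1), α j * ζ ^ (k - j))) :=
        sum_le_sum fun k _ => mul_le_mul_of_nonneg_left (he k) (hα k)
    _ = C * r * ∑ k ∈ range N, α k * ζ ^ (k + 1)
          + C * B * ∑ k ∈ range N, ∑ j ∈ range (k + 1), α k * α j * ζ ^ (k - j) := by
        simp only [mul_sum, ← sum_add_distrib]
        refine sum_congr rfl fun k _ => ?_
        rw [mul_add, mul_add, mul_sum, mul_sum]
        exact congrArg₂ (· + ·) (by ring) (sum_congr rfl fun j _ => by ring)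
    _ ≤ C * r * (ζ / (2 * (1 - ζ)) + ζ / 2 * ∑ k ∈ range N, α k ^ 2)
          + C * B * (1 / (1 - ζ) * ∑ k ∈ range N, α k ^ 2) := by
        gcongr ?_ + ?_
        · exact mul_le_mul_of_nonneg_left (sum_mul_pow_succ_le hζ0 hζ1 α N) (mul_nonneg hC hr)
        · exact mul_le_mul_of_nonneg_left hconv (mul_nonneg hC hB)
    _ = C * r * ζ / (2 * (1 - ζ)) + C * (r * ζ / 2 + B / (1 - ζ)) * ∑ k ∈ range N, α k ^ 2 := by
        ring

theorem stmt18_general {n p : ℕ}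
    (x : ℕ → Matrix (Fin n) (Fin p) ℝ)
    (xbar : ℕ → Matrix (Fin n) (Fin p) ℝ)
    (C B ζ : ℝ) (hC : 0 ≤ C) (hB : 0 ≤ B) (hζ0 : 0 ≤ ζ) (hζ1 : ζ < 1)
    (α : ℕ → ℝ) (hα : ∀ k, 0 ≤ α k)
    (hcons : ∀ k : ℕ, frob (x (k + 1) - xbar (k + 1))
      ≤ C * (frob (x 0) * ζ ^ (k + 1) + B * ∑ j ∈ Finset.range (k + 1), α j * ζ ^ (k - j)))
    (K : ℕ) :
    ∑ k ∈ Finset.range (K + 1), α k * frob (x (k + 1) - xbar (k + 1))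
      ≤ C * frob (x 0) * ζ / (2 * (1 - ζ)) +
        C * (frob (x 0) * ζ / 2 + B / (1 - ζ)) * ∑ k ∈ Finset.range (K + 1), (α k) ^ 2 :=
  sum_mul_le_of_le_geometric_conv hC hB (Real.sqrt_nonneg _) hζ0 hζ1 hα hcons (K + 1)

theorem stmt18 {n p : ℕ} (hn : 0 < n)
    (x : ℕ → Matrix (Fin n) (Fin p) ℝ)
    (xbar : ℕ → Matrix (Fin n) (Fin p) ℝ)
    (hxbar : ∀ k, xbar k = (Matrix.of fun _ _ : Fin n => (1 : ℝ) / n) * x k)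
    (C B ζ : ℝ) (hC : 0 ≤ C) (hB : 0 ≤ B) (hζ0 : 0 ≤ ζ) (hζ1 : ζ < 1)
    (α : ℕ → ℝ) (hα : ∀ k, 0 ≤ α k)
    (hcons : ∀ k : ℕ, frob (x (k + 1) - xbar (k + 1))
      ≤ C * (frob (x 0) * ζ ^ (k + 1) + B * ∑ j ∈ Finset.range (k + 1), α j * ζ ^ (k - j)))
    (K : ℕ) :
    ∑ k ∈ Finset.range (K + 1), α k * frob (x (k + 1) - xbar (k + 1))
      ≤ C * frob (x 0) * ζ / (2 * (1 - ζ)) +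
        C * (frob (x 0) * ζ / 2 + B / (1 - ζ)) * ∑ k ∈ Finset.range (K + 1), (α k) ^ 2 :=
  stmt18_general x xbar C B ζ hC hB hζ0 hζ1 α hα hcons K
end

section
/- Let L : ℝ^d → ℝ be differentiable with L_*-Lipschitz gradient, r : ℝ^d → ℝ ∪ {+∞} proper, and define x^{k+1} ∈ argmin_u { r(u) + (1/(2α))‖u − (x^k − α∇L(x^k))‖² } for a fixed α with 0 < α < 1/L_*. Then (without convexity of r) the composite value satisfies L(x^{k+1}) + r(x^{k+1}) ≤ L(x^k) + r(x^k) − (1/(2α) − L_*/2)‖x^{k+1} − x^k‖² for every k. -/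
lemma descent_lemma {d : ℕ} (f : EuclideanSpace ℝ (Fin d) → ℝ) (L : ℝ) (hL : 0 ≤ L)
    (hdiff : Differentiable ℝ f)
    (hlip : ∀ a b : EuclideanSpace ℝ (Fin d),
      ‖gradient f a - gradient f b‖ ≤ L * ‖a - b‖)
    (x y : EuclideanSpace ℝ (Fin d)) :
    f y ≤ f x + (inner ℝ (gradient f x) (y - x) : ℝ) + L / 2 * ‖y - x‖ ^ 2 := by
  set v := y - x with hv
  have hgc : Continuous (gradient f) := by
    have : LipschitzWith (Real.toNNReal L) (gradient f) :=
      LipschitzWith.of_dist_le_mul fun a b => by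
        simpa [dist_eq_norm, Real.coe_toNNReal L hL] using hlip a b
    exact this.continuous
  have hc : ∀ t : ℝ, HasDerivAt (fun t : ℝ => x + t • v) v t := fun t => by
    simpa using ((hasDerivAt_id t).smul_const v).const_add x
  have hfd : ∀ a, fderiv ℝ f a v = (inner ℝ (gradient f a) v : ℝ) := by
    intro a
    rw [((hdiff a).hasFDerivAt).unique (hdiff a).hasGradientAt.hasFDerivAt]
    simp [InnerProductSpace.toDual_apply_apply]
  set φ' : ℝ → ℝ := fun t => (inner ℝ (gradient f (x + t • v)) v : ℝ) with hφ'
  have hder : ∀ t : ℝ, HasDerivAt (fun t : ℝ => f (x + t • v)) (φ' t) t := by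
    intro t
    have := ((hdiff (x + t • v)).hasFDerivAt).comp_hasDerivAt t (hc t)
    rw [show φ' t = fderiv ℝ f (x + t • v) v from (hfd _).symm]
    exact this
  have hcont : Continuous φ' := by
    apply Continuous.inner (hgc.comp (continuous_const.add (continuous_id.smul continuous_const))) continuous_const
  have hint : ∫ t in (0:ℝ)..1, φ' t = f y - f x := by
    have := intervalIntegral.integral_eq_sub_of_hasDerivAt
      (f := fun t : ℝ => f (x + t • v)) (fun t _ => hder t)
      (hcont.intervalIntegrable 0 1)
    simpa [hv] using this
  have hbound : ∀ t ∈ Set.Icc (0:ℝ) 1,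
      φ' t ≤ (inner ℝ (gradient f x) v : ℝ) + L * t * ‖v‖ ^ 2 := by
    intro t ht
    have h1 : φ' t - (inner ℝ (gradient f x) v : ℝ)
        = (inner ℝ (gradient f (x + t • v) - gradient f x) v : ℝ) := by
      rw [inner_sub_left]
    have h2 : (inner ℝ (gradient f (x + t • v) - gradient f x) v : ℝ)
        ≤ ‖gradient f (x + t • v) - gradient f x‖ * ‖v‖ := real_inner_le_norm _ _
    have h3 : ‖gradient f (x + t • v) - gradient f x‖ ≤ L * (t * ‖v‖) := by
      have := hlip (x + t • v) x
      simpa [norm_smul, abs_of_nonneg ht.1, mul_assoc] using this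
    nlinarith [norm_nonneg v, ht.1, mul_le_mul_of_nonneg_right h3 (norm_nonneg v)]
  have hcont2 : Continuous (fun t : ℝ => (inner ℝ (gradient f x) v : ℝ) + L * t * ‖v‖ ^ 2) :=
    by fun_prop
  have hmono : ∫ t in (0:ℝ)..1, φ' t
      ≤ ∫ t in (0:ℝ)..1, ((inner ℝ (gradient f x) v : ℝ) + L * t * ‖v‖ ^ 2) := by
    apply intervalIntegral.integral_mono_on (by norm_num) (hcont.intervalIntegrable 0 1)
      ((hcont2.intervalIntegrable 0 1))
    exact hbound
  have hval : ∫ t in (0:ℝ)..1, ((inner ℝ (gradient f x) v : ℝ) + L * t * ‖v‖ ^ 2)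
      = (inner ℝ (gradient f x) v : ℝ) + L / 2 * ‖v‖ ^ 2 := by
    rw [intervalIntegral.integral_add intervalIntegrable_const
      ((by fun_prop : Continuous fun t : ℝ => L * t * ‖v‖ ^ 2).intervalIntegrable 0 1)]
    have : ∫ t in (0:ℝ)..1, L * t * ‖v‖ ^ 2 = L / 2 * ‖v‖ ^ 2 := by
      have : (fun t : ℝ => L * t * ‖v‖ ^ 2) = fun t : ℝ => (L * ‖v‖ ^ 2) * t := by
        funext t; ring
      rw [this, intervalIntegral.integral_const_mul, integral_id]
      ring
    rw [this]; simp
  linarith [hint ▸ hval ▸ hmono]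

theorem stmt19 {d : ℕ} (f : EuclideanSpace ℝ (Fin d) → ℝ) (Lstar α : ℝ)
    (hLstar : 0 < Lstar)
    (hdiff : Differentiable ℝ f)
    (hlip : ∀ a b : EuclideanSpace ℝ (Fin d),
      ‖gradient f a - gradient f b‖ ≤ Lstar * ‖a - b‖)
    (r : EuclideanSpace ℝ (Fin d) → EReal)
    (hproper : ∃ z, r z ≠ ⊤) (hnotbot : ∀ z, r z ≠ ⊥)
    (hα0 : 0 < α) (hα1 : α < 1 / Lstar)
    (x : ℕ → EuclideanSpace ℝ (Fin d))
    (hmin : ∀ (k : ℕ) (u : EuclideanSpace ℝ (Fin d)),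
      r (x (k + 1)) +
          (((1 / (2 * α)) * ‖x (k + 1) - (x k - α • gradient f (x k))‖ ^ 2 : ℝ) : EReal)
        ≤ r u + (((1 / (2 * α)) * ‖u - (x k - α • gradient f (x k))‖ ^ 2 : ℝ) : EReal))
    (k : ℕ) :
    (f (x (k + 1)) : EReal) + r (x (k + 1)) ≤
      (f (x k) : EReal) + r (x k) -
        (((1 / (2 * α) - Lstar / 2) * ‖x (k + 1) - x k‖ ^ 2 : ℝ) : EReal) := by
  have hptop : r (x (k + 1)) ≠ ⊤ := by
    obtain ⟨z, hz⟩ := hproper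
    intro h
    have h2 := hmin k z
    rw [h, EReal.top_add_coe] at h2
    exact (EReal.add_lt_top hz (EReal.coe_ne_top _)).not_ge h2
  lift r (x (k + 1)) to ℝ using ⟨hptop, hnotbot _⟩ with a ha
  rcases eq_or_ne (r (x k)) ⊤ with hqt | hqt
  · rw [hqt, EReal.coe_add_top, EReal.top_sub_coe]
    exact le_top
  lift r (x k) to ℝ using ⟨hqt, hnotbot _⟩ with b hb
  set p := x (k + 1)
  set q := x k
  set g := gradient f q with hg
  -- real form of the minimality at u = q
  have hmq := hmin k q
  rw [← ha, ← hb] at hmq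
  have hsub : q - (q - α • g) = α • g := by abel
  rw [hsub] at hmq
  have hmqr : a + 1 / (2 * α) * ‖p - (q - α • g)‖ ^ 2
      ≤ b + 1 / (2 * α) * ‖α • g‖ ^ 2 := by exact_mod_cast hmq
  -- expansion
  have hid : p - (q - α • g) = (p - q) + α • g := by abel
  have hexp : ‖p - (q - α • g)‖ ^ 2
      = ‖p - q‖ ^ 2 + 2 * (α * (inner ℝ g (p - q) : ℝ)) + ‖α • g‖ ^ 2 := by
    rw [hid, norm_add_sq_real, real_inner_smul_right, real_inner_comm]
  -- descent lemma
  have hdesc : f p ≤ f q + (inner ℝ g (p - q) : ℝ) + Lstar / 2 * ‖p - q‖ ^ 2 :=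
    descent_lemma f Lstar hLstar.le hdiff hlip q p
  -- conclude over the reals
  have hreal : f p + a ≤ f q + b - (1 / (2 * α) - Lstar / 2) * ‖p - q‖ ^ 2 := by
    rw [hexp] at hmqr
    have h2α : (0:ℝ) < 2 * α := by linarith
    have hkey : 1 / (2 * α) * (‖p - q‖ ^ 2 + 2 * (α * (inner ℝ g (p - q) : ℝ)))
        = 1 / (2 * α) * ‖p - q‖ ^ 2 + (inner ℝ g (p - q) : ℝ) := by
      field_simp
    nlinarith [hkey]
  exact_mod_cast hreal
end
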